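/- arXiv:1603.04499 — 4 statements merged into one kernel-verified Lean document; each statement's English description precedes it below -/
import Mathlib

section
/- Let F be an n×n real Metzler matrix (all off-diagonal entries nonnegative), let G be an n×s real matrix with nonnegative entries, let H be an r×n real matrix with nonnegative entries, and let λ be a real number. Then the following two statements are equivalent: (i) F is Hurwitz stable (every eigenvalue of F, viewed as a complex matrix, has negative real part) and every entry of the row vector −𝟙ᵣᵀ H F⁻¹ G is strictly less than λ; (ii) there exists a vector v ∈ ℝⁿ with all entries strictly positive such that every entry of the row vector vᵀ F + 𝟙ᵣᵀ H is strictly negative and every entry of the row vector vᵀ G is strictly less than λ. -/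
/-!
The key fact is that a Hurwitz stable Metzler matrix `F` has an entrywise nonpositive inverse:
for large `α` the matrix `Q = α⁻¹ (F + α)` is nonnegative with spectrum in the open unit disc,
so by Gelfand's formula some power of `Q` is a contraction, and the Neumann series exhibits
`(1 - Q)⁻¹` as a nonnegative matrix. Conversely, a positive `v` with `vᵀ F < 0`
forces `Re z < 0` for every eigenvalue: if `F x = z x` and `y = |x|`, then
`|z + α| y ≤ (F + α) y`, and pairing with `v` gives `|z + α| < α`.

With `c = 𝟙ᵀ H`, the vector `vᵀ = (c + ε 𝟙ᵀ)(-F⁻¹)` satisfies `vᵀ F + c = -ε 𝟙ᵀ`, and its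
product with `G` exceeds `-c F⁻¹ G` only by `O(ε)`. Conversely,
`vᵀ + c F⁻¹ = (vᵀ F + c) F⁻¹ ≥ 0`, which bounds `-c F⁻¹ G` by `vᵀ G`.
-/

open Matrix Filter Topology

attribute [local instance] Matrix.linftyOpNormedAddCommGroup Matrix.linftyOpNormedRing
  Matrix.linftyOpNormedAlgebra

theorem spectrum.exists_norm_pow_lt_one {A : Type*} [NormedRing A] [NormedAlgebra ℂ A]
    [CompleteSpace A] {a : A} (h : ∀ z ∈ spectrum ℂ a, ‖z‖ < 1) :
    ∃ N, 0 < N ∧ ‖a ^ N‖ < 1 := by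
  have hρ : spectralRadius ℂ a < 1 := by
    rcases (spectrum ℂ a).eq_empty_or_nonempty with hσ | hσ
    · simp [spectralRadius, hσ]
    · exact_mod_cast spectrum.spectralRadius_lt_of_forall_lt_of_nonempty hσ
        (r := 1) fun z hz => by exact_mod_cast h z hz
  obtain ⟨N, hN, hN0⟩ := ((spectrum.pow_norm_pow_one_div_tendsto_nhds_spectralRadius a
    |>.eventually_lt_const hρ).and (eventually_gt_atTop 0)).exists
  refine ⟨N, hN0, lt_of_not_ge fun h1 => ?_⟩
  rw [ENNReal.ofReal_lt_one] at hN
  exact hN.not_ge (Real.one_le_rpow h1 (by positivity))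

theorem Complex.eventually_norm_add_ofReal_lt {w : ℂ} (hw : w.re < 0) :
    ∀ᶠ α : ℝ in atTop, ‖w + α‖ < α := by
  filter_upwards [eventually_gt_atTop 0, eventually_gt_atTop (‖w‖ ^ 2 / (-2 * w.re))]
    with α hα hαw
  rw [div_lt_iff₀ (by linarith)] at hαw
  refine lt_of_pow_lt_pow_left₀ 2 hα.le ?_
  rw [Complex.sq_norm, Complex.normSq_apply] at hαw ⊢
  simp only [Complex.add_re, Complex.add_im, Complex.ofReal_re, Complex.ofReal_im, add_zero]
  nlinarith

theorem exists_pos_forall_add_mul_lt {ι : Type*} [Finite ι] {a b : ι → ℝ} {c : ℝ}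
    (h : ∀ j, a j < c) : ∃ ε > 0, ∀ j, a j + ε * b j < c := by
  have hnear : ∀ᶠ ε in 𝓝 (0 : ℝ), ∀ j, a j + ε * b j < c :=
    eventually_all.2 fun j => Tendsto.eventually_lt_const (h j) <|
      (continuous_const.add (continuous_id.mul continuous_const)).tendsto' _ _ (by simp)
  exact ((eventually_mem_nhdsWithin (s := Set.Ioi 0)).and
    (hnear.filter_mono nhdsWithin_le_nhds)).exists

namespace Matrix

def IsMetzler {n : Type*} (F : Matrix n n ℝ) : Prop := ∀ i j, i ≠ j → 0 ≤ F i j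

theorem IsMetzler.add_smul_one_nonneg {n : Type*} [DecidableEq n] {F : Matrix n n ℝ}
    (hF : F.IsMetzler) {α : ℝ} (hα : ∀ i, -F i i ≤ α) (i j : n) : 0 ≤ (F + α • 1) i j := by
  rcases eq_or_ne i j with rfl | hij
  · simpa [add_comm, neg_le_iff_add_nonneg] using hα i
  · simpa [one_apply_ne hij] using hF i j hij

theorem linfty_opNorm_map_ofReal {m n : Type*} [Fintype m] [Fintype n] (M : Matrix m n ℝ) :
    ‖M.map (Complex.ofReal ·)‖ = ‖M‖ := by
  simp [linfty_opNorm_def]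

theorem tsum_apply_nonneg {m n : Type*} [Fintype m] [Fintype n] {f : ℕ → Matrix m n ℝ}
    (hf : Summable f) (h : ∀ k i j, 0 ≤ f k i j) (i : m) (j : n) : 0 ≤ (∑' k, f k) i j :=
  (Pi.hasSum.1 (Pi.hasSum.1 hf.hasSum i) j).nonneg fun k => h k i j

theorem vecMul_nonneg {m n : Type*} [Fintype m] {u : m → ℝ} {M : Matrix m n ℝ}
    (hu : ∀ i, 0 ≤ u i) (hM : ∀ i j, 0 ≤ M i j) (j : n) : 0 ≤ (u ᵥ* M) j :=
  Finset.sum_nonneg fun i _ => mul_nonneg (hu i) (hM i j)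

theorem norm_map_ofReal_mulVec_le {m n : Type*} [Fintype n] {A : Matrix m n ℝ}
    (hA : ∀ i j, 0 ≤ A i j) (x : n → ℂ) (i : m) :
    ‖(A.map (Complex.ofReal ·) *ᵥ x) i‖ ≤ (A *ᵥ fun j => ‖x j‖) i := by
  simp only [mulVec, dotProduct, map_apply]
  refine (norm_sum_le _ _).trans_eq (Finset.sum_congr rfl fun j _ => ?_)
  rw [norm_mul, Complex.norm_real, Real.norm_of_nonneg (hA i j)]

section Square

variable {ι : Type*} [Fintype ι] [DecidableEq ι]

def IsHurwitzStable (F : Matrix ι ι ℝ) : Prop :=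
  ∀ z ∈ spectrum ℂ (F.map (Complex.ofReal ·)), z.re < 0

theorem exists_mulVec_eq_smul_of_mem_spectrum {K : Type*} [Field K] {M : Matrix ι ι K} {z : K}
    (hz : z ∈ spectrum K M) : ∃ x ≠ 0, M *ᵥ x = z • x := by
  rw [spectrum.mem_iff, isUnit_iff_isUnit_det, isUnit_iff_ne_zero, not_not,
    ← exists_mulVec_eq_zero_iff] at hz
  obtain ⟨x, hx0, hx⟩ := hz
  refine ⟨x, hx0, ?_⟩
  rwa [sub_mulVec, Algebra.algebraMap_eq_smul_one, smul_mulVec, one_mulVec, sub_eq_zero,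
    eq_comm] at hx

theorem vecMul_pos_of_isUnit {K : Matrix ι ι ℝ} (hK : ∀ i j, 0 ≤ K i j) (hunit : IsUnit K)
    {u : ι → ℝ} (hu : ∀ i, 0 < u i) (j : ι) : 0 < (u ᵥ* K) j := by
  obtain ⟨i, hi⟩ : ∃ i, K i j ≠ 0 := by
    by_contra! h
    exact ((isUnit_iff_isUnit_det K).1 hunit).ne_zero (det_eq_zero_of_column_eq_zero j h)
  exact Finset.sum_pos' (fun k _ => mul_nonneg (hu k).le (hK k j))
    ⟨i, Finset.mem_univ _, mul_pos (hu i) ((hK i j).lt_of_ne' hi)⟩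

theorem exists_nonneg_one_sub_mul_eq_one_of_norm_pow_lt_one {Q : Matrix ι ι ℝ}
    (hQ : ∀ i j, 0 ≤ Q i j) {N : ℕ} (hN : ‖Q ^ N‖ < 1) :
    ∃ K : Matrix ι ι ℝ, (∀ i j, 0 ≤ K i j) ∧ (1 - Q) * K = 1 := by
  have hS : ∀ i j, 0 ≤ (∑ k ∈ Finset.range N, Q ^ k) i j := fun i j => by
    rw [sum_apply]
    exact Finset.sum_nonneg fun k _ => pow_apply_nonneg hQ k i j
  have hT : ∀ i j, 0 ≤ (∑' k, (Q ^ N) ^ k) i j :=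
    tsum_apply_nonneg (summable_geometric_of_norm_lt_one hN)
      fun k => pow_apply_nonneg (pow_apply_nonneg hQ N) k
  refine ⟨(∑ k ∈ Finset.range N, Q ^ k) * ∑' k, (Q ^ N) ^ k, fun i j => ?_, ?_⟩
  · rw [mul_apply]
    exact Finset.sum_nonneg fun k _ => mul_nonneg (hS i k) (hT k j)
  · rw [← mul_assoc, ← neg_sub Q 1, neg_mul, mul_geom_sum, neg_sub]
    exact mul_neg_geom_series _ hN

theorem exists_nonneg_one_sub_mul_eq_one_of_norm_spectrum_lt_one {Q : Matrix ι ι ℝ}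
    (hQ : ∀ i j, 0 ≤ Q i j) (hσ : ∀ z ∈ spectrum ℂ (Q.map (Complex.ofReal ·)), ‖z‖ < 1) :
    ∃ K : Matrix ι ι ℝ, (∀ i j, 0 ≤ K i j) ∧ (1 - Q) * K = 1 := by
  obtain ⟨N, -, hN⟩ := spectrum.exists_norm_pow_lt_one hσ
  refine exists_nonneg_one_sub_mul_eq_one_of_norm_pow_lt_one hQ (N := N) ?_
  rw [← linfty_opNorm_map_ofReal]
  exact (Q.map_pow Complex.ofRealHom N).symm ▸ hN

theorem IsHurwitzStable.isUnit_det {F : Matrix ι ι ℝ} (hF : F.IsHurwitzStable) :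
    IsUnit F.det := by
  have h0 : (0 : ℂ) ∉ spectrum ℂ (F.map (Complex.ofReal ·)) := fun h => (hF 0 h).false
  rw [spectrum.zero_notMem_iff, isUnit_iff_isUnit_det, isUnit_iff_ne_zero] at h0
  refine isUnit_iff_ne_zero.2 fun h => h0 ?_
  rw [show F.map (Complex.ofReal ·) = Complex.ofRealHom.mapMatrix F from rfl, ← RingHom.map_det,
    h, map_zero]

theorem IsMetzler.isHurwitzStable_of_vecMul_neg {F : Matrix ι ι ℝ} (hF : F.IsMetzler)
    {v : ι → ℝ} (hv : ∀ i, 0 < v i) (hvF : ∀ j, (v ᵥ* F) j < 0) : F.IsHurwitzStable := by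
  intro z hz
  obtain ⟨x, hx0, hx⟩ := exists_mulVec_eq_smul_of_mem_spectrum hz
  obtain ⟨α, hα⟩ := (Set.finite_range fun i => -F i i).bddAbove
  have hA := hF.add_smul_one_nonneg (α := α) fun i => hα (Set.mem_range_self i)
  set y : ι → ℝ := fun i => ‖x i‖
  obtain ⟨j₀, hj₀⟩ := Function.ne_iff.1 hx0
  have hy₀ : 0 < y j₀ := norm_pos_iff.2 hj₀
  have hAx : (F + α • 1).map (Complex.ofReal ·) *ᵥ x = (z + α) • x := by
    have hmap : (F + α • 1).map (Complex.ofReal ·) = F.map (Complex.ofReal ·) + (α : ℂ) • 1 := by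
      ext i j
      by_cases hij : i = j <;> simp [hij]
    rw [hmap, add_mulVec, hx, smul_mulVec, one_mulVec, add_smul]
  have hAy : ∀ i, ‖z + α‖ * y i ≤ ((F + α • 1) *ᵥ y) i := fun i => by
    simpa [hAx, norm_mul] using norm_map_ofReal_mulVec_le hA x i
  have hvy : 0 < v ⬝ᵥ y :=
    Finset.sum_pos' (fun i _ => mul_nonneg (hv i).le (norm_nonneg _))
      ⟨j₀, Finset.mem_univ _, mul_pos (hv j₀) hy₀⟩
  have hvFy : (v ᵥ* F) ⬝ᵥ y < 0 :=
    Finset.sum_neg' (fun j _ => mul_nonpos_of_nonpos_of_nonneg (hvF j).le (norm_nonneg _))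
      ⟨j₀, Finset.mem_univ _, mul_neg_of_neg_of_pos (hvF j₀) hy₀⟩
  have hnorm : ‖z + α‖ < α := by
    refine lt_of_mul_lt_mul_right ?_ hvy.le
    calc ‖z + α‖ * (v ⬝ᵥ y) = v ⬝ᵥ (‖z + α‖ • y) := by
          rw [dotProduct_smul, smul_eq_mul, mul_comm]
      _ ≤ v ⬝ᵥ ((F + α • 1) *ᵥ y) :=
          Finset.sum_le_sum fun i _ => mul_le_mul_of_nonneg_left (hAy i) (hv i).le
      _ = (v ᵥ* F) ⬝ᵥ y + α * (v ⬝ᵥ y) := by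
          rw [dotProduct_mulVec, vecMul_add, add_dotProduct, vecMul_smul, vecMul_one,
            smul_dotProduct, smul_eq_mul]
      _ < α * (v ⬝ᵥ y) := by linarith
  have hre := Complex.re_le_norm (z + α)
  rw [Complex.add_re, Complex.ofReal_re] at hre
  linarith

theorem IsMetzler.inv_nonpos {F : Matrix ι ι ℝ} (hF : F.IsMetzler) (hH : F.IsHurwitzStable)
    (i j : ι) : F⁻¹ i j ≤ 0 := by
  obtain ⟨α, hαF, hσα, hα⟩ : ∃ α : ℝ, (∀ i, -F i i ≤ α) ∧
      (∀ w ∈ spectrum ℂ (F.map (Complex.ofReal ·)), ‖w + α‖ < α) ∧ 0 < α :=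
    ((eventually_all.2 fun i => eventually_ge_atTop _).and
      (((eventually_all_finite (finite_spectrum _)).2 fun w hw =>
        Complex.eventually_norm_add_ofReal_lt (hH w hw)).and (eventually_gt_atTop 0))).exists
  set Q := α⁻¹ • (F + α • 1)
  have hQ : ∀ i j, 0 ≤ Q i j := fun i j =>
    mul_nonneg (inv_nonneg.2 hα.le) (hF.add_smul_one_nonneg hαF i j)
  have hσQ : ∀ z ∈ spectrum ℂ (Q.map (Complex.ofReal ·)), ‖z‖ < 1 := by
    intro z hz
    set u : ℂˣ := Units.mk0 (α⁻¹ : ℂ) (by simp [hα.ne'])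
    have hQc : Q.map (Complex.ofReal ·) =
        u • (algebraMap ℂ _ (α : ℂ) + F.map (Complex.ofReal ·)) := by
      ext i j
      by_cases hij : i = j <;> simp [Q, u, hij, Algebra.algebraMap_eq_smul_one, add_comm]
    have hw : (α * z - α : ℂ) + α ∈
        spectrum ℂ (algebraMap ℂ _ (α : ℂ) + F.map (Complex.ofReal ·)) := by
      rw [sub_add_cancel, ← spectrum.smul_mem_smul_iff (r := u), ← hQc]
      convert hz using 1
      simp [u, hα.ne']
    have hαz := hσα _ (spectrum.add_mem_add_iff.1 hw)
    rw [sub_add_cancel, norm_mul, Complex.norm_real, Real.norm_of_nonneg hα.le] at hαz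
    exact (mul_lt_iff_lt_one_right hα).1 hαz
  obtain ⟨K, hK, hQK⟩ := exists_nonneg_one_sub_mul_eq_one_of_norm_spectrum_lt_one hQ hσQ
  have hFQ : F = -α • (1 - Q) := by
    simp only [Q, smul_sub, smul_smul, neg_mul, mul_inv_cancel₀ hα.ne']
    module
  have hFK : F * -(α⁻¹ • K) = 1 := by
    rw [hFQ, smul_mul_assoc, mul_neg, mul_smul_comm, hQK, smul_neg, smul_smul, neg_mul,
      neg_smul, neg_neg, mul_inv_cancel₀ hα.ne', one_smul]
  rw [inv_eq_right_inv hFK]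
  exact neg_nonpos.2 (mul_nonneg (inv_nonneg.2 hα.le) (hK i j))

theorem IsMetzler.exists_pos_vecMul_add_neg_of_isHurwitzStable {κ : Type*} [Finite κ]
    {F : Matrix ι ι ℝ} (hF : F.IsMetzler) (hH : F.IsHurwitzStable) {c : ι → ℝ} (hc : ∀ i, 0 ≤ c i)
    {G : Matrix ι κ ℝ} {lam : ℝ} (hbound : ∀ j, -((c ᵥ* F⁻¹ ᵥ* G) j) < lam) :
    ∃ v : ι → ℝ, (∀ i, 0 < v i) ∧ (∀ j, (v ᵥ* F) j + c j < 0) ∧ ∀ j, (v ᵥ* G) j < lam := by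
  have hdet : IsUnit F.det := hH.isUnit_det
  have hK : ∀ i j, 0 ≤ (-F⁻¹) i j := fun i j => neg_nonneg.2 (hF.inv_nonpos hH i j)
  obtain ⟨ε, hε, hεG⟩ := exists_pos_forall_add_mul_lt (b := (1 ᵥ* -F⁻¹) ᵥ* G) hbound
  refine ⟨(c + ε • 1) ᵥ* -F⁻¹, vecMul_pos_of_isUnit hK
    (isUnit_nonsing_inv_iff.2 ((isUnit_iff_isUnit_det F).2 hdet)).neg
    fun i => by simpa using add_pos_of_nonneg_of_pos (hc i) hε, fun j => ?_, fun j => ?_⟩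
  · rw [vecMul_vecMul, neg_mul, nonsing_inv_mul _ hdet, vecMul_neg, vecMul_one]
    simpa using hε
  · have hvG : ((c + ε • 1) ᵥ* -F⁻¹) ᵥ* G =
        -(c ᵥ* F⁻¹ ᵥ* G) + ε • ((1 ᵥ* -F⁻¹) ᵥ* G) := by
      rw [add_vecMul, add_vecMul, smul_vecMul, smul_vecMul, vecMul_neg, neg_vecMul]
    rw [hvG]
    exact hεG j

theorem IsMetzler.neg_vecMul_inv_vecMul_le {κ : Type*} {F : Matrix ι ι ℝ} (hF : F.IsMetzler)
    (hH : F.IsHurwitzStable) {v c : ι → ℝ} (hvF : ∀ j, (v ᵥ* F) j + c j < 0)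
    {G : Matrix ι κ ℝ} (hG : ∀ i j, 0 ≤ G i j) (j : κ) : -((c ᵥ* F⁻¹ ᵥ* G) j) ≤ (v ᵥ* G) j := by
  have hvw : v + c ᵥ* F⁻¹ = -(v ᵥ* F + c) ᵥ* -F⁻¹ := by
    rw [neg_vecMul, vecMul_neg, neg_neg, add_vecMul, vecMul_vecMul v,
      mul_nonsing_inv _ hH.isUnit_det, vecMul_one]
  have hvwG := vecMul_nonneg (hvw ▸ vecMul_nonneg (fun i => neg_nonneg.2 (hvF i).le)
    fun i j => neg_nonneg.2 (hF.inv_nonpos hH i j)) hG j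
  rw [add_vecMul, Pi.add_apply] at hvwG
  linarith

end Square

end Matrix

/-- Lemma 1 of the paper (Briat): for a Metzler matrix `F`, nonnegative `G`, `H` and a real
`λ`, Hurwitz stability of `F` together with the entrywise bound `-𝟙ᵣᵀ H F⁻¹ G < λ 𝟙ₛᵀ` is
equivalent to the existence of a positive vector `v` with `vᵀ F + 𝟙ᵣᵀ H < 0` and
`vᵀ G < λ 𝟙ₛᵀ`. -/
theorem metzler_hurwitz_iff_positive_vector
    (n r s : ℕ) (F : Matrix (Fin n) (Fin n) ℝ) (G : Matrix (Fin n) (Fin s) ℝ)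
    (H : Matrix (Fin r) (Fin n) ℝ) (lam : ℝ)
    (hMetzler : ∀ i j, i ≠ j → 0 ≤ F i j)
    (hG : ∀ i j, 0 ≤ G i j) (hH : ∀ i j, 0 ≤ H i j) :
    ((∀ z ∈ spectrum ℂ (F.map (Complex.ofReal ·)), z.re < 0) ∧
      (∀ j : Fin s, -(((((fun _ : Fin r => (1 : ℝ)) ᵥ* H) ᵥ* F⁻¹) ᵥ* G) j) < lam)) ↔
    (∃ v : Fin n → ℝ, (∀ i, 0 < v i) ∧
      (∀ j : Fin n, (v ᵥ* F) j + ((fun _ : Fin r => (1 : ℝ)) ᵥ* H) j < 0) ∧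
      (∀ j : Fin s, (v ᵥ* G) j < lam)) := by
  have hc : ∀ j, 0 ≤ ((fun _ : Fin r => (1 : ℝ)) ᵥ* H) j :=
    vecMul_nonneg (fun _ => zero_le_one) hH
  constructor
  · rintro ⟨hHur, hbound⟩
    exact IsMetzler.exists_pos_vecMul_add_neg_of_isHurwitzStable hMetzler hHur hc hbound
  · rintro ⟨v, hv, hvF, hvG⟩
    have hHur : F.IsHurwitzStable :=
      IsMetzler.isHurwitzStable_of_vecMul_neg hMetzler hv fun j => by linarith [hvF j, hc j]
    exact ⟨hHur, fun j =>
      (IsMetzler.neg_vecMul_inv_vecMul_le hMetzler hHur hvF hG j).trans_lt (hvG j)⟩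
end

section
/- Let F be an n×n real Metzler matrix (all off-diagonal entries nonnegative). If there exists a vector v ∈ ℝⁿ with all entries strictly positive such that every entry of the row vector vᵀ F is strictly negative, then F is Hurwitz stable, i.e., every eigenvalue of F (viewed as a complex matrix) has strictly negative real part. -/
/-!
An eigenvalue of `F` is an eigenvalue of `Fᵀ`, and conjugating `Fᵀ` by `diag v` turns the
weighted column sums `(∑_{j ≠ k} v j * F j k) / v k` into Gershgorin row radii. Hence every
eigenvalue `z` lies in a disc centred at `F k k` of that radius for some `k`, and for a Metzler
matrix this gives `z.re * v k ≤ (vᵀ F) k < 0`.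
-/

open Matrix Finset

namespace Matrix

variable {K n : Type*} [Fintype n] [DecidableEq n]

theorem spectrum_transpose [Field K] (A : Matrix n n K) : spectrum K Aᵀ = spectrum K A := by
  ext μ
  simp only [mem_spectrum_iff_isRoot_charpoly, charpoly_transpose]

theorem spectrum_diagonal_mul_mul_diagonal_inv [Field K] {w : n → K} (hw : ∀ i, w i ≠ 0)
    (A : Matrix n n K) : spectrum K (diagonal w * A * diagonal w⁻¹) = spectrum K A := by
  let u : (Matrix n n K)ˣ :=
    ⟨diagonal w, diagonal w⁻¹, by simp [diagonal_mul_diagonal, hw],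
      by simp [diagonal_mul_diagonal, hw]⟩
  exact spectrum.units_conjugate (u := u)

theorem exists_norm_sub_diag_mul_le_weighted_col_sum [NormedField K] {A : Matrix n n K}
    {w : n → K} (hw : ∀ i, w i ≠ 0) {μ : K} (hμ : μ ∈ spectrum K A) :
    ∃ k, ‖μ - A k k‖ * ‖w k‖ ≤ ∑ j ∈ univ.erase k, ‖w j‖ * ‖A j k‖ := by
  have hμ' : μ ∈ spectrum K (diagonal w⁻¹ * Aᵀ * diagonal w⁻¹⁻¹) := by
    rwa [spectrum_diagonal_mul_mul_diagonal_inv (by simpa using hw), spectrum_transpose]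
  rw [← spectrum_toLin', ← Module.End.hasEigenvalue_iff_mem_spectrum] at hμ'
  obtain ⟨k, hk⟩ := eigenvalue_mem_ball hμ'
  refine ⟨k, ?_⟩
  have hdiag : (w k)⁻¹ * A k k * w k = A k k := by field_simp [hw k]
  simp only [mem_closedBall_iff_norm, inv_inv, diagonal_mul, mul_diagonal, transpose_apply,
    Pi.inv_apply, norm_mul, norm_inv, hdiag, mul_assoc, ← mul_sum] at hk
  rw [le_inv_mul_iff₀ (norm_pos_iff.2 (hw k))] at hk
  simpa only [mul_comm] using hk

theorem exists_re_mul_le_vecMul_of_mem_spectrum {F : Matrix n n ℝ}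
    (hF : ∀ i j, i ≠ j → 0 ≤ F i j) {v : n → ℝ} (hv : ∀ i, 0 < v i) {z : ℂ}
    (hz : z ∈ spectrum ℂ (F.map (Complex.ofReal ·))) : ∃ k, z.re * v k ≤ (v ᵥ* F) k := by
  obtain ⟨k, hk⟩ := exists_norm_sub_diag_mul_le_weighted_col_sum
    (w := fun i => (v i : ℂ)) (fun i => Complex.ofReal_ne_zero.2 (hv i).ne') hz
  have hoff : ∑ j ∈ univ.erase k, ‖(v j : ℂ)‖ * ‖(F j k : ℂ)‖ =
      ∑ j ∈ univ.erase k, v j * F j k :=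
    sum_congr rfl fun j hj => by
      rw [Complex.norm_of_nonneg (hv j).le, Complex.norm_of_nonneg (hF j k (ne_of_mem_erase hj))]
  simp only [map_apply, Complex.norm_of_nonneg (hv k).le, hoff] at hk
  have hre : z.re - F k k ≤ ‖z - F k k‖ := by
    simpa using Complex.re_le_norm (z - F k k)
  refine ⟨k, ?_⟩
  calc z.re * v k = (z.re - F k k) * v k + v k * F k k := by ring
    _ ≤ ‖z - F k k‖ * v k + v k * F k k := by gcongr; exact (hv k).le
    _ ≤ ∑ j ∈ univ.erase k, v j * F j k + v k * F k k := by gcongr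
    _ = (v ᵥ* F) k := by rw [vecMul, dotProduct, ← add_sum_erase _ _ (mem_univ k), add_comm]

end Matrix

/-- If `F` is Metzler and there is a positive vector `v` with `vᵀ F < 0` entrywise,
then `F` is Hurwitz stable. -/
theorem metzler_hurwitz_of_positive_vector
    (n : ℕ) (F : Matrix (Fin n) (Fin n) ℝ)
    (hMetzler : ∀ i j, i ≠ j → 0 ≤ F i j)
    (v : Fin n → ℝ) (hv : ∀ i, 0 < v i)
    (hvF : ∀ j, (v ᵥ* F) j < 0) :
    ∀ z ∈ spectrum ℂ (F.map (Complex.ofReal ·)), z.re < 0 := by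
  intro z hz
  obtain ⟨k, hk⟩ := exists_re_mul_le_vecMul_of_mem_spectrum hMetzler hv hz
  exact neg_of_mul_neg_left (hk.trans_lt (hvF k)) (hv k).le
end

section
/- Let F be an n×n real Metzler matrix (all off-diagonal entries nonnegative) that is Hurwitz stable. Then F is invertible and every entry of the matrix −F⁻¹ is nonnegative. -/
/-!
For large `α > 0` the matrix `x = 1 + α⁻¹ F` is entrywise nonnegative because `F` is Metzler, and
its spectrum `{1 + λ / α}` lies in the open unit disc because `|α + λ|² = α² + 2α Re λ + |λ|²`
and `Re λ < 0`. By Gelfand's formula the Neumann series `∑ xᵏ` then converges, and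
`-F⁻¹ = α⁻¹ (1 - x)⁻¹ = α⁻¹ ∑ xᵏ` is a limit of nonnegative matrices.
-/
open Matrix Filter
open scoped Pointwise

theorem summable_pow_of_spectralRadius_lt_one {A : Type*} [NormedRing A] [NormedAlgebra ℂ A]
    [CompleteSpace A] {a : A} (ha : spectralRadius ℂ a < 1) : Summable (a ^ ·) := by
  obtain ⟨s, hρs, hs1⟩ := ENNReal.lt_iff_exists_nnreal_btwn.mp ha
  have hdecay : ∀ᶠ k : ℕ in atTop, ‖a ^ k‖ ≤ s ^ k := by
    filter_upwards [eventually_gt_atTop 0,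
      (spectrum.pow_nnnorm_pow_one_div_tendsto_nhds_spectralRadius a).eventually_lt_const hρs]
      with k hk0 hk
    rw [one_div, ← ENNReal.coe_rpow_of_nonneg _ (by positivity), ENNReal.coe_lt_coe,
      NNReal.rpow_inv_lt_iff (by positivity), NNReal.rpow_natCast] at hk
    exact_mod_cast hk.le
  exact .of_norm_bounded_eventually_nat
    (summable_geometric_of_lt_one s.coe_nonneg (by exact_mod_cast hs1)) hdecay

theorem summable_pow_of_forall_spectrum_norm_lt_one {A : Type*} [NormedRing A]
    [NormedAlgebra ℂ A] [CompleteSpace A] {a : A} (ha : ∀ z ∈ spectrum ℂ a, ‖z‖ < 1) :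
    Summable (a ^ ·) := by
  cases subsingleton_or_nontrivial A
  · exact (summable_zero : Summable fun _ : ℕ => (0 : A)).congr fun _ => Subsingleton.elim _ _
  · refine summable_pow_of_spectralRadius_lt_one ?_
    simpa using spectrum.spectralRadius_lt_of_forall_lt a (r := 1) fun z hz => by
      simpa [← NNReal.coe_lt_coe] using ha z hz

theorem spectrum.one_add_smul_eq {𝕜 A : Type*} [Field 𝕜] [Ring A] [Algebra 𝕜 A] {c : 𝕜}
    (hc : c ≠ 0) (a : A) : spectrum 𝕜 (1 + c • a) = {1} + c • spectrum 𝕜 a := by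
  have h := spectrum.unit_smul_eq_smul (R := 𝕜) a (Units.mk0 c hc)
  rw [Units.smul_def, Units.smul_def, Units.val_mk0] at h
  rw [← map_one (algebraMap 𝕜 A), ← spectrum.singleton_add_eq, h]

theorem Complex.eventually_norm_one_add_inv_mul_lt_one {z : ℂ} (hz : z.re < 0) :
    ∀ᶠ α : ℝ in atTop, ‖1 + (α : ℂ)⁻¹ * z‖ < 1 := by
  filter_upwards [eventually_gt_atTop 0, eventually_gt_atTop (‖z‖ ^ 2 / (-2 * z.re))]
    with α hα0 hα
  rw [div_lt_iff₀ (by linarith)] at hα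
  have hsq : ‖(α : ℂ) + z‖ ^ 2 = α ^ 2 + 2 * α * z.re + ‖z‖ ^ 2 := by
    simp only [Complex.sq_norm, Complex.normSq_apply, Complex.add_re, Complex.add_im,
      Complex.ofReal_re, Complex.ofReal_im]
    ring
  have hlt : ‖(α : ℂ) + z‖ < α :=
    (pow_lt_pow_iff_left₀ (norm_nonneg _) hα0.le two_ne_zero).mp (by nlinarith)
  have hα0' : (α : ℂ) ≠ 0 := Complex.ofReal_ne_zero.mpr hα0.ne'
  rwa [show 1 + (α : ℂ)⁻¹ * z = (α : ℂ)⁻¹ * (α + z) by field_simp, norm_mul, norm_inv,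
    Complex.norm_of_nonneg hα0.le, inv_mul_lt_one₀ hα0]

theorem Matrix.summable_pow_of_summable_pow_map_ofReal {n : Type*} [Fintype n] [DecidableEq n]
    {x : Matrix n n ℝ} (hx : Summable ((x.map (Complex.ofReal ·)) ^ ·)) : Summable (x ^ ·) := by
  have hpow (k : ℕ) : (x.map (Complex.ofReal ·)) ^ k = (x ^ k).map (Complex.ofReal ·) :=
    (map_pow Complex.ofRealHom.mapMatrix x k).symm
  convert hx.map Complex.reAddGroupHom.mapMatrix (continuous_id.matrix_map Complex.continuous_re)
    using 1
  ext k i j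
  simp [hpow]

theorem Matrix.one_add_inv_smul_apply_nonneg {n : Type*} [DecidableEq n] {F : Matrix n n ℝ}
    (hF : ∀ i j, i ≠ j → 0 ≤ F i j) {α : ℝ} (hα : 0 < α) (hdiag : ∀ i, -α ≤ F i i) (i j : n) :
    0 ≤ (1 + α⁻¹ • F) i j := by
  rcases eq_or_ne i j with rfl | hij
  · have := mul_le_mul_of_nonneg_left (hdiag i) (inv_nonneg.mpr hα.le)
    rw [mul_neg, inv_mul_cancel₀ hα.ne'] at this
    simp only [add_apply, one_apply_eq, smul_apply, smul_eq_mul]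
    linarith
  · simpa [one_apply_ne hij] using mul_nonneg (inv_nonneg.mpr hα.le) (hF i j hij)

attribute [local instance] Matrix.linftyOpNormedRing Matrix.linftyOpNormedAlgebra

/-- A Hurwitz stable Metzler matrix `F` is invertible and `-F⁻¹` is entrywise nonnegative. -/
theorem metzler_hurwitz_neg_inv_nonneg
    (n : ℕ) (F : Matrix (Fin n) (Fin n) ℝ)
    (hMetzler : ∀ i j, i ≠ j → 0 ≤ F i j)
    (hHurwitz : ∀ z ∈ spectrum ℂ (F.map (Complex.ofReal ·)), z.re < 0) :
    IsUnit F ∧ ∀ i j, 0 ≤ (-(F⁻¹)) i j := by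
  set M := F.map (Complex.ofReal ·)
  obtain ⟨α, hα, hdiag, hspec⟩ : ∃ α : ℝ, 0 < α ∧ (∀ i, -α ≤ F i i) ∧
      ∀ z ∈ spectrum ℂ M, ‖1 + (α : ℂ)⁻¹ * z‖ < 1 :=
    ((eventually_gt_atTop 0).and
      ((eventually_all.2 fun i => tendsto_neg_atTop_atBot.eventually_le_atBot (F i i)).and
        ((finite_spectrum M).eventually_all.2 fun z hz =>
          Complex.eventually_norm_one_add_inv_mul_lt_one (hHurwitz z hz)))).exists
  set x := 1 + α⁻¹ • F
  have hxc : x.map (Complex.ofReal ·) = 1 + (α⁻¹ : ℂ) • M := by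
    ext i j
    by_cases h : i = j <;> simp [x, M, one_apply, h]
  have hsum : Summable (x ^ ·) := by
    refine summable_pow_of_summable_pow_map_ofReal
      (summable_pow_of_forall_spectrum_norm_lt_one ?_)
    rw [hxc, spectrum.one_add_smul_eq (by simpa using hα.ne') M]
    rintro _ ⟨_, rfl, _, ⟨z, hz, rfl⟩, rfl⟩
    exact hspec z hz
  have hinv : -F * (α⁻¹ • ∑' k, x ^ k) = 1 := by
    have : -F = α • (1 - x) := by simp [x, smul_smul, hα.ne']
    rw [this, smul_mul_smul_comm, mul_inv_cancel₀ hα.ne', one_smul, hsum.one_sub_mul_tsum_pow]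
  rw [neg_mul_comm] at hinv
  refine ⟨(isUnit_iff_isUnit_det F).mpr (isUnit_det_of_right_inverse hinv), fun i j => ?_⟩
  have hx : ∀ i j, 0 ≤ x i j := one_add_inv_smul_apply_nonneg hMetzler hα hdiag
  have hentry : HasSum (fun k => (x ^ k) i j) ((∑' k, x ^ k) i j) :=
    Pi.hasSum.mp (Pi.hasSum.mp hsum.hasSum i) j
  rw [inv_eq_right_inv hinv, neg_neg, Matrix.smul_apply, smul_eq_mul]
  exact mul_nonneg (inv_nonneg.mpr hα.le) (hentry.nonneg fun k => pow_apply_nonneg hx k i j)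
end

section
/- Let n, p ≥ 1, let A be an n×n real matrix with nonnegative entries, let J, B, D be n×n real diagonal matrices with J_{ii} ∈ {0,1}, B_{ii} = β_i > 0, and D_{ii} = δ_i > 0. For each i ∈ {1,…,n} let Π_i be a p×p real Metzler matrix, write 𝒟Π_i and 𝒪Π_i for its diagonal and off-diagonal parts, set w_i = −Π_i 𝟙ₚ, and define Π′_i = Π_i − δ_i·Id and w′_i = −Π′_i 𝟙ₚ = w_i + δ_i 𝟙ₚ. Suppose that for all i ∈ {1,…,n} and ℓ ∈ {1,…,p} there are constants κ_{iℓ} > 0 and α_{iℓ} > 0 with Π_{i,ℓℓ} < 0 and κ_{iℓ} (−Π_{i,ℓℓ})^{α_{iℓ}} ≤ (−Π_{i,ℓℓ}) + δ_i. If v ∈ ℝ^{np} has all entries strictly positive and satisfies the entrywise strict inequality vᵀ( ⨁_{i=1}^n (𝒪Π_i)ᵀ + (J B A) ⊗ (u₁ 𝟙ₚᵀ) ) + 𝟙ₚᵀ ⨁_{i=1}^n w_iᵀ + 𝟙ₙᵀ (D ⊗ 𝟙ₚᵀ) < vᵀ ⨁_{i=1}^n ⨁_{ℓ=1}^p κ_{iℓ}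 (−Π_{i,ℓℓ})^{α_{iℓ}}, then v also satisfies the entrywise strict inequality vᵀ( ⨁_{i=1}^n (Π′_i)ᵀ + (J B A) ⊗ (u₁ 𝟙ₚᵀ) ) + 𝟙ₙᵀ ⨁_{i=1}^n (w′_i)ᵀ < 0. -/
open Matrix
open scoped Kronecker

/-- Key deterministic implication in Theorem 2 of the paper: if the positive vector `v`
satisfies the posynomial-form inequality
`vᵀ(⨁ᵢ (𝒪Πᵢ)ᵀ + (J B A) ⊗ (u₁ 𝟙ₚᵀ)) + 𝟙ₚᵀ ⨁ᵢ wᵢᵀ + 𝟙ₙᵀ (D ⊗ 𝟙ₚᵀ)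
  < vᵀ ⨁ᵢ ⨁ₗ κᵢₗ (-Πᵢ,ₗₗ)^{αᵢₗ}`,
where `κᵢₗ (-Πᵢ,ₗₗ)^{αᵢₗ} ≤ (-Πᵢ,ₗₗ) + δᵢ`, then `v` satisfies
`vᵀ(⨁ᵢ (Π′ᵢ)ᵀ + (J B A) ⊗ (u₁ 𝟙ₚᵀ)) + 𝟙ₙᵀ ⨁ᵢ (w′ᵢ)ᵀ < 0`, with `Π′ᵢ = Πᵢ - δᵢ Id` and
`w′ᵢ = -Π′ᵢ 𝟙ₚ = wᵢ + δᵢ 𝟙ₚ`. -/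
theorem sir_isolation_posynomial_implies_stability_ineq
    (n p : ℕ) (hn : 0 < n) (hp : 0 < p)
    (A : Matrix (Fin n) (Fin n) ℝ) (hA : ∀ i j, 0 ≤ A i j)
    (jd β δ : Fin n → ℝ)
    (hjd : ∀ i, jd i = 0 ∨ jd i = 1) (hβ : ∀ i, 0 < β i) (hδ : ∀ i, 0 < δ i)
    (J B D : Matrix (Fin n) (Fin n) ℝ)
    (hJ : J = Matrix.diagonal jd) (hB : B = Matrix.diagonal β) (hD : D = Matrix.diagonal δ)
    (Pi' : Fin n → Matrix (Fin p) (Fin p) ℝ)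
    (hPi' : ∀ i, ∀ k l, k ≠ l → 0 ≤ Pi' i k l)
    (w : Fin n → Fin p → ℝ) (hw : ∀ i, w i = -((Pi' i) *ᵥ fun _ => (1 : ℝ)))
    (Pi'' : Fin n → Matrix (Fin p) (Fin p) ℝ)
    (hPi'' : ∀ i, Pi'' i = Pi' i - δ i • (1 : Matrix (Fin p) (Fin p) ℝ))
    (w' : Fin n → Fin p → ℝ) (hw' : ∀ i, w' i = -((Pi'' i) *ᵥ fun _ => (1 : ℝ)))
    (u1 : Fin p → ℝ) (hu1 : u1 = fun k : Fin p => if (k : ℕ) = 0 then (1 : ℝ) else 0)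
    (κ α : Fin n → Fin p → ℝ)
    (hκ : ∀ i l, 0 < κ i l) (hα : ∀ i l, 0 < α i l)
    (hdiag_neg : ∀ i l, Pi' i l l < 0)
    (hmono : ∀ i l, κ i l * (-(Pi' i l l)) ^ (α i l) ≤ (-(Pi' i l l)) + δ i)
    (v : Fin n × Fin p → ℝ) (hv : ∀ q, 0 < v q)
    (hposy : ∀ q : Fin n × Fin p,
      (v ᵥ* ((Matrix.of fun q r : Fin n × Fin p =>
          if q.1 = r.1 then (if q.2 = r.2 then 0 else ((Pi' q.1)ᵀ) q.2 r.2) else 0) +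
        (J * B * A) ⊗ₖ (Matrix.of fun k _ : Fin p => u1 k))) q
        + w q.1 q.2 + δ q.1
      < v q * (κ q.1 q.2 * (-(Pi' q.1 q.2 q.2)) ^ (α q.1 q.2))) :
    ∀ q : Fin n × Fin p,
      (v ᵥ* ((Matrix.of fun q r : Fin n × Fin p =>
          if q.1 = r.1 then ((Pi'' q.1)ᵀ) q.2 r.2 else 0) +
        (J * B * A) ⊗ₖ (Matrix.of fun k _ : Fin p => u1 k))) q
        + w' q.1 q.2 < 0 := by

  intro q
  have hvq := hv q
  have hm := hmono q.1 q.2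
  have hK := hposy q
  -- w' in terms of w
  have hw'q : w' q.1 q.2 = w q.1 q.2 + δ q.1 := by
    rw [hw', hw, hPi'', Matrix.sub_mulVec]
    simp [Matrix.smul_mulVec, Matrix.one_mulVec]
    ring
  -- decompose the block-diagonal matrix
  have hFd : (Matrix.of fun q r : Fin n × Fin p =>
        if q.1 = r.1 then ((Pi'' q.1)ᵀ) q.2 r.2 else 0)
      = (Matrix.of fun q r : Fin n × Fin p =>
          if q.1 = r.1 then (if q.2 = r.2 then 0 else ((Pi' q.1)ᵀ) q.2 r.2) else 0)
        + Matrix.diagonal (fun q : Fin n × Fin p => Pi'' q.1 q.2 q.2) := by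
    ext ⟨a, b⟩ ⟨c, e⟩
    by_cases h1 : a = c
    · subst h1
      by_cases h2 : b = e
      · subst h2
        simp [Matrix.diagonal]
      · simp [Matrix.diagonal, h2, hPi'', Matrix.one_apply, Ne.symm h2, Prod.ext_iff]
    · simp [Matrix.diagonal, h1, Prod.ext_iff]
  rw [hFd, hw'q]
  rw [add_right_comm, Matrix.vecMul_add, Matrix.vecMul_add, Pi.add_apply,
    Matrix.vecMul_diagonal]
  have hd : Pi'' q.1 q.2 q.2 = Pi' q.1 q.2 q.2 - δ q.1 := by
    simp [hPi'', Matrix.one_apply]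
  rw [hd]
  have h2 : v q * (κ q.1 q.2 * (-(Pi' q.1 q.2 q.2)) ^ (α q.1 q.2))
      ≤ v q * ((-(Pi' q.1 q.2 q.2)) + δ q.1) :=
    mul_le_mul_of_nonneg_left hm hvq.le
  rw [Matrix.vecMul_add, Pi.add_apply] at hK
  simp only [Pi.add_apply]
  nlinarith [hK, h2]
end
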